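/- Upper bound of Proposition 6.1: for every probability measure ν on {∘,•}^ℤ and every realization (B_n)_n of model B with B_0 ∼ ν (i.e., B_{n+1} = ℬ(B_n, U_n) with i.i.d. uniform updates independent of B_0), one has P(B_{0,n} = •) ≤ d_n = 4^{−n} C(2n+1,n) for every n ∈ ℕ. Equivalently, for every realization (A_n)_n of model A with arbitrary initial distribution, P(A_{0,n}A_{1,n} ∈ {00,11}) ≤ d_n. -/

import Mathlib

open MeasureTheory ProbabilityTheory

/-!
Conventions: a configuration of model A is `x : ℤ → Bool` (`false` = 0, `true` = 1);
a configuration of model B is `y : ℤ → Bool` (`false` = ∘, `true` = •);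
an update is `u : ℤ → Bool` (`true` = ↑, `false` = →).
-/

/-- The local map `𝒜` of model A. -/
def modelA (x u : ℤ → Bool) : ℤ → Bool := fun i =>
  if x (i - 1) = x i then xor (x i) (u i) else x (i - 1)

/-- The local map `ℬ` of model B: the `i`-th coordinate of `ℬ(y,u)` is `•` iff
`(y_{i-1}y_i, u_{i-1}u_i) ∈ {(•∘, →⋅), (∘•, ⋅↑), (••, ↑↑), (••, →→)}`. -/
def modelB (y u : ℤ → Bool) : ℤ → Bool := fun i =>
  match y (i - 1), y i with
  | true, false => !u (i - 1)
  | false, true => u i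
  | true, true => u (i - 1) == u i
  | false, false => false

open scoped ENNReal

/-!
A `•` of model B at `(j, n)` descends from a `•` at time `n - 1` either at the same site (update
`↑`) or at the left neighbour (update `→`). Hence the interval whose left end moves left when the
update just left of it reads `→`, and whose right end moves left when its own update reads `→`,
contains an ancestor at every earlier time and so never becomes empty. Its two ends read distinct
updates that the past of the exploration has not looked at, so its width performs the lazy walk
with steps `-1, 0, 0, +1` started at `0`. By the reflection principle this walk stays nonnegative
for `n` steps with probability `4⁻ⁿ ∑ₖ (C(2n, n-k) - C(2n, n-k-2)) = 4⁻ⁿ C(2n+1, n)`.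

Model A reduces to model B: the indicator of equal neighbours `x_{i-1} = x_i` of a model A
realization is a model B realization driven by the same updates.
-/

lemma modelB_eq_true_cases {y u : ℤ → Bool} {i : ℤ} (h : modelB y u i = true) :
    (y i = true ∧ u i = true) ∨ (y (i - 1) = true ∧ u (i - 1) = false) := by
  revert h
  unfold modelB
  cases y (i - 1) <;> cases y i <;> cases u (i - 1) <;> cases u i <;> simp

lemma modelB_beq_modelA (x u : ℤ → Bool) :
    modelB (fun i => x (i - 1) == x i) u = fun i => modelA x u (i - 1) == modelA x u i := by
  funext i
  unfold modelA modelB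
  simp only [sub_sub, one_add_one_eq_two]
  cases x (i - 2) <;> cases x (i - 1) <;> cases x i <;> cases u (i - 1) <;> cases u i <;> rfl

def lag (ξ : Bool) : ℤ := if ξ then 0 else 1

/-- `r 0, r 1, …` are the update rows from the latest time backwards; an endpoint moves one step
left exactly when the update it reads is `→`. -/
def dualInterval (r : ℕ → ℤ → Bool) (j : ℤ) : ℕ → ℤ × ℤ
  | 0 => (j, j)
  | t + 1 =>
    ((dualInterval r j t).1 - lag (r t ((dualInterval r j t).1 - 1)),
      (dualInterval r j t).2 - lag (r t (dualInterval r j t).2))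

lemma dualInterval_mem_Icc (r : ℕ → ℤ → Bool) (j : ℤ) (t : ℕ) :
    (dualInterval r j t).1 ∈ Set.Icc (j - t) j ∧ (dualInterval r j t).2 ∈ Set.Icc (j - t) j := by
  induction t with
  | zero => simp [dualInterval]
  | succ t ih =>
    simp only [dualInterval, lag, Set.mem_Icc] at ih ⊢
    push_cast
    split <;> split <;> omega

lemma dualInterval_congr {r r' : ℕ → ℤ → Bool} {j : ℤ} {t : ℕ}
    (h : ∀ s < t, ∀ i ∈ Set.Icc (j - t) j, r s i = r' s i) :
    ∀ s ≤ t, dualInterval r j s = dualInterval r' j s := by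
  intro s hs
  induction s with
  | zero => rfl
  | succ s ih =>
    have hI := dualInterval_mem_Icc r j s
    simp only [Set.mem_Icc] at hI
    simp only [dualInterval, ← ih (by omega)]
    rw [h s (by omega) _ ⟨by omega, by omega⟩, h s (by omega) _ ⟨by omega, by omega⟩]

lemma exists_mem_dualInterval {Z : ℕ → ℤ → Bool} {r : ℕ → ℤ → Bool} {j : ℤ} (hj : Z 0 j = true)
    {t : ℕ} (hZ : ∀ s < t, Z s = modelB (Z (s + 1)) (r s)) :
    ∃ i ∈ Set.Icc (dualInterval r j t).1 (dualInterval r j t).2, Z t i = true := by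
  induction t with
  | zero => exact ⟨j, by simp [dualInterval], hj⟩
  | succ t ih =>
    obtain ⟨i, ⟨hLi, hiR⟩, hi⟩ := ih fun s hs => hZ s (by omega)
    rw [hZ t (by omega)] at hi
    simp only [dualInterval, lag, Set.mem_Icc]
    rcases modelB_eq_true_cases hi with ⟨hi, hu⟩ | ⟨hi, hu⟩
    · refine ⟨i, ⟨?_, ?_⟩, hi⟩ <;> split <;> grind
    · refine ⟨i - 1, ⟨?_, ?_⟩, hi⟩ <;> split <;> grind

def intChoose (m : ℕ) (z : ℤ) : ℕ := if 0 ≤ z then m.choose z.toNat else 0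

lemma intChoose_of_neg (m : ℕ) {z : ℤ} (hz : z < 0) : intChoose m z = 0 := by
  simp [intChoose, hz.not_ge]

@[simp] lemma intChoose_natCast (m k : ℕ) : intChoose m k = m.choose k := by
  simp [intChoose]

lemma intChoose_succ (m : ℕ) (z : ℤ) :
    intChoose (m + 1) z = intChoose m z + intChoose m (z - 1) := by
  obtain ⟨k, rfl⟩ | hz := (le_or_gt 0 z).imp Int.eq_ofNat_of_zero_le id
  · cases k with
    | zero => simp [intChoose]
    | succ k =>
      rw [show ((k + 1 : ℕ) : ℤ) - 1 = (k : ℕ) by push_cast; ring, intChoose_natCast,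
        intChoose_natCast, intChoose_natCast, Nat.choose_succ_succ', add_comm]
  · simp [intChoose_of_neg _ hz, intChoose_of_neg _ (show z - 1 < 0 by omega)]

lemma intChoose_sub_two_le {t : ℕ} {z : ℤ} (hz : z ≤ t) :
    intChoose (2 * t) (z - 2) ≤ intChoose (2 * t) z := by
  obtain ⟨k, hk⟩ | hz2 := (le_or_gt 0 (z - 2)).imp Int.eq_ofNat_of_zero_le id
  · rw [hk, show z = ((k + 2 : ℕ) : ℤ) by push_cast; omega, intChoose_natCast, intChoose_natCast]
    exact (Nat.choose_le_succ_of_lt_half_left (by omega)).trans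
      (Nat.choose_le_succ_of_lt_half_left (by omega))
  · simp [intChoose_of_neg _ hz2]

lemma intChoose_two_mul_add_one (t : ℕ) :
    intChoose (2 * t) (t + 1) = intChoose (2 * t) (t - 1) := by
  cases t with
  | zero => simp [intChoose]
  | succ t =>
    rw [show ((t + 1 : ℕ) : ℤ) + 1 = ((t + 2 : ℕ) : ℤ) by push_cast; ring,
      show ((t + 1 : ℕ) : ℤ) - 1 = (t : ℕ) by push_cast; ring, intChoose_natCast, intChoose_natCast]
    exact Nat.choose_symm_of_eq_add (by ring)

/-- By the reflection principle, the number of `t`-step paths from `0` to `k` that stay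
nonnegative, for the walk with the four equally likely steps `-1, 0, 0, +1`.
(The truncated subtraction never truncates for `-1 ≤ k`.) -/
def ballot (t : ℕ) (k : ℤ) : ℕ := intChoose (2 * t) (t - k) - intChoose (2 * t) (t - k - 2)

lemma ballot_cast {t : ℕ} {k : ℤ} (hk : -1 ≤ k) :
    (ballot t k : ℤ) = intChoose (2 * t) (t - k) - intChoose (2 * t) (t - k - 2) := by
  have := intChoose_sub_two_le (t := t) (z := t - k)
  rcases hk.lt_or_eq with hk | rfl
  · rw [ballot, Nat.cast_sub (this (by omega))]
  · simp [ballot, sub_neg_eq_add, show (t : ℤ) + 1 - 2 = t - 1 by ring,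
      intChoose_two_mul_add_one]

lemma ballot_zero_zero : ballot 0 0 = 1 := by
  simp [ballot, intChoose]

lemma intChoose_two_mul_add_two (t : ℕ) (z : ℤ) :
    (intChoose (2 * (t + 1)) z : ℤ) =
      intChoose (2 * t) z + 2 * intChoose (2 * t) (z - 1) + intChoose (2 * t) (z - 2) := by
  have h1 := intChoose_succ (2 * t + 1) z
  have h2 := intChoose_succ (2 * t) z
  have h3 := intChoose_succ (2 * t) (z - 1)
  rw [show 2 * (t + 1) = 2 * t + 1 + 1 by ring, show z - 1 - 1 = z - 2 by ring] at *
  push_cast [h1, h2, h3]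
  ring

lemma ballot_succ (t : ℕ) {k : ℤ} (hk : 0 ≤ k) :
    ballot (t + 1) k = ballot t (k - 1) + 2 * ballot t k + ballot t (k + 1) := by
  zify
  rw [ballot_cast (by omega), ballot_cast (by omega), ballot_cast (by omega),
    ballot_cast (by omega), intChoose_two_mul_add_two, intChoose_two_mul_add_two]
  push_cast
  ring_nf

/-- Telescoping: `ballot n k = g k - g (k + 1)` with `g k = C(2n, n-k) + C(2n, n-k-1)`. -/
lemma sum_ballot (n : ℕ) : ∑ k ∈ Finset.range (n + 1), ballot n k = (2 * n + 1).choose n := by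
  zify
  set g : ℕ → ℤ := fun k => intChoose (2 * n) (n - k) + intChoose (2 * n) (n - k - 1)
  have hg : ∀ k : ℕ, (ballot n k : ℤ) = g k - g (k + 1) := fun k => by
    rw [ballot_cast (by omega)]
    simp only [g]; push_cast; ring_nf
  rw [Finset.sum_congr rfl fun k _ => hg k, Finset.sum_range_sub']
  have hsucc := intChoose_succ (2 * n) n
  rw [intChoose_natCast, intChoose_natCast] at hsucc
  simp only [g, Nat.cast_zero, sub_zero, intChoose_natCast]
  rw [intChoose_of_neg _ (z := n - (n + 1 : ℕ)) (by omega),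
    intChoose_of_neg _ (z := n - (n + 1 : ℕ) - 1) (by omega), hsucc]
  push_cast
  ring

lemma measure_eq_of_fair {Ω : Type*} [MeasurableSpace Ω] {P : Measure Ω} [IsProbabilityMeasure P]
    {X : Ω → Bool} (hX : Measurable X) (hfair : P {ω | X ω = true} = 1 / 2) (ξ : Bool) :
    P {ω | X ω = ξ} = 2⁻¹ := by
  cases ξ
  · have hcompl : {ω | X ω = false} = {ω | X ω = true}ᶜ := by ext; simp
    rw [hcompl, prob_compl_eq_one_sub (s := {ω | X ω = true}) (hX (measurableSet_singleton true)),
      hfair, one_div, ENNReal.one_sub_inv_two]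
  · rw [hfair, one_div]

lemma measure_eq_and_eq_of_fair {Ω : Type*} [MeasurableSpace Ω] {P : Measure Ω}
    [IsProbabilityMeasure P] {X Y : Ω → Bool} (hX : Measurable X) (hY : Measurable Y)
    (hXY : IndepFun X Y P) (hXfair : P {ω | X ω = true} = 1 / 2)
    (hYfair : P {ω | Y ω = true} = 1 / 2) (ξ η : Bool) :
    P {ω | X ω = ξ ∧ Y ω = η} = 4⁻¹ := by
  have h := hXY.measure_inter_preimage_eq_mul _ _ (measurableSet_singleton ξ)
    (measurableSet_singleton η)
  change P (X ⁻¹' {ξ} ∩ Y ⁻¹' {η}) = _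
  rw [h, Set.preimage, Set.preimage]
  simp only [Set.mem_singleton_iff]
  rw [measure_eq_of_fair hX hXfair, measure_eq_of_fair hY hYfair]
  norm_num [← ENNReal.mul_inv]

section Survival

variable {Ω : Type*} (V : ℤ × ℕ → Ω → Bool) (j : ℤ) (n : ℕ)

def dualRows (ω : Ω) : ℕ → ℤ → Bool := fun t i => V (i, n - 1 - t) ω

def survivalEvent (t : ℕ) (a b : ℤ) : Set Ω :=
  {ω | (∀ s ≤ t, (dualInterval (dualRows V n ω) j s).1 ≤ (dualInterval (dualRows V n ω) j s).2) ∧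
    dualInterval (dualRows V n ω) j t = (a, b)}

/-- The updates read by the first `t` steps of the dual exploration. -/
noncomputable def dependenceWindow (t : ℕ) : Finset (ℤ × ℕ) :=
  Finset.Icc (j - t) j ×ˢ Finset.Icc (n - t) (n - 1)

variable {V j n}

lemma survivalEvent_eq_empty_of_lt {t : ℕ} {a b : ℤ} (hba : b < a) :
    survivalEvent V j n t a b = ∅ := by
  refine Set.eq_empty_of_forall_notMem fun ω ⟨hsurv, hI⟩ => ?_
  have := hsurv t le_rfl
  rw [hI] at this
  exact hba.not_ge this

lemma survivalEvent_disjoint {t : ℕ} {a b a' b' : ℤ} (h : (a, b) ≠ (a', b')) :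
    Disjoint (survivalEvent V j n t a b) (survivalEvent V j n t a' b') :=
  Set.disjoint_left.2 fun _ ⟨_, hI⟩ ⟨_, hI'⟩ => h (hI.symm.trans hI')

lemma survivalEvent_eq_preimage {t : ℕ} (ht : t ≤ n) (a b : ℤ) :
    survivalEvent V j n t a b =
      (fun ω (p : dependenceWindow j n t) => V p ω) ⁻¹'
        ((fun ω (p : dependenceWindow j n t) => V p ω) '' survivalEvent V j n t a b) := by
  refine (Set.subset_preimage_image _ _).antisymm ?_
  rintro ω' ⟨ω, ⟨hsurv, hI⟩, hωω'⟩
  have hcongr := dualInterval_congr (r := dualRows V n ω) (r' := dualRows V n ω') (j := j)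
    (t := t) fun s hs i hi => congrFun hωω' ⟨(i, n - 1 - s), by
      simp only [dependenceWindow, Finset.mem_product, Finset.mem_Icc]
      simp only [Set.mem_Icc] at hi
      omega⟩
  exact ⟨fun s hs => hcongr s hs ▸ hsurv s hs, hcongr t le_rfl ▸ hI⟩

lemma survivalEvent_succ {t : ℕ} {a b : ℤ} (hab : a ≤ b) :
    survivalEvent V j n (t + 1) a b = ⋃ p : Bool × Bool,
      survivalEvent V j n t (a + lag p.1) (b + lag p.2) ∩
        {ω | V (a + lag p.1 - 1, n - 1 - t) ω = p.1 ∧ V (b + lag p.2, n - 1 - t) ω = p.2} := by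
  ext ω
  simp only [survivalEvent, Set.mem_iUnion, Set.mem_inter_iff, Set.mem_ofPred_eq, Prod.exists]
  set I := dualInterval (dualRows V n ω) j
  have hI : I (t + 1) = ((I t).1 - lag (V ((I t).1 - 1, n - 1 - t) ω),
      (I t).2 - lag (V ((I t).2, n - 1 - t) ω)) := rfl
  constructor
  · rintro ⟨hsurv, hend⟩
    obtain ⟨ha, hb⟩ := Prod.ext_iff.1 (hI.symm.trans hend)
    simp only at ha hb
    refine ⟨V ((I t).1 - 1, n - 1 - t) ω, V ((I t).2, n - 1 - t) ω,
      ⟨fun s hs => hsurv s (by omega), Prod.ext (by dsimp only; omega) (by dsimp only; omega)⟩,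
      ?_, ?_⟩ <;> congr 2 <;> omega
  · rintro ⟨ξ, η, ⟨hsurv, hend⟩, hξ, hη⟩
    rw [hend] at hI
    simp only [add_sub_cancel_right, hξ, hη] at hI
    refine ⟨fun s hs => ?_, hI⟩
    rcases Nat.le_succ_iff.1 hs with hs | rfl
    · exact hsurv s hs
    · rw [hI]; exact hab

lemma mem_iUnion_survivalEvent {y : ℕ → ℤ → Bool} {ω : Ω}
    (hy : ∀ m, y (m + 1) = modelB (y m) fun i => V (i, m) ω) (hj : y n j = true) :
    ω ∈ ⋃ k ∈ Finset.range (n + 1), ⋃ a : ℤ, survivalEvent V j n n a (a + k) := by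
  have hI := dualInterval_mem_Icc (dualRows V n ω) j n
  simp only [Set.mem_Icc] at hI
  set I := dualInterval (dualRows V n ω) j
  have hback : ∀ s < n, y (n - s) = modelB (y (n - (s + 1))) (dualRows V n ω s) := by
    intro s hs
    rw [show n - s = n - 1 - s + 1 by omega, hy, show n - (s + 1) = n - 1 - s by omega]
    rfl
  have hsurv : ∀ s ≤ n, (I s).1 ≤ (I s).2 := fun s hs => by
    obtain ⟨i, hi, -⟩ := exists_mem_dualInterval (Z := fun t => y (n - t)) (t := s)
      (by simpa using hj) fun s' hs' => hback s' (by omega)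
    exact hi.1.trans hi.2
  have hwidth := hsurv n le_rfl
  simp only [Set.mem_iUnion, Finset.mem_range]
  exact ⟨((I n).2 - (I n).1).toNat, by omega, (I n).1, hsurv,
    Prod.ext rfl (show (I n).2 = (I n).1 + ((I n).2 - (I n).1).toNat by omega)⟩

variable [MeasurableSpace Ω]

lemma measurableSet_survivalEvent (hVmeas : ∀ p, Measurable (V p)) {t : ℕ} (ht : t ≤ n)
    (a b : ℤ) : MeasurableSet (survivalEvent V j n t a b) := by
  have hfin : MeasurableSet ((fun ω (p : dependenceWindow j n t) => V p ω) ''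
      survivalEvent V j n t a b) := (Set.toFinite _).measurableSet
  rw [survivalEvent_eq_preimage ht]
  exact hfin.preimage (measurable_pi_lambda _ fun p => hVmeas p)

variable {P : Measure Ω} [IsProbabilityMeasure P]

/-- The two updates read at step `t + 1` lie outside the dependence window of step `t`. -/
lemma measure_survivalEvent_inter_fresh (hVmeas : ∀ p, Measurable (V p)) (hVindep : iIndepFun V P)
    (hVunif : ∀ p, P {ω | V p ω = true} = 1 / 2) {t : ℕ} (ht : t < n) (a b : ℤ) (ξ η : Bool) :
    P (survivalEvent V j n t a b ∩ {ω | V (a - 1, n - 1 - t) ω = ξ ∧ V (b, n - 1 - t) ω = η}) =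
      P (survivalEvent V j n t a b) * 4⁻¹ := by
  rcases lt_or_ge b a with hba | hab
  · simp [survivalEvent_eq_empty_of_lt hba]
  set T : Finset (ℤ × ℕ) := {(a - 1, n - 1 - t), (b, n - 1 - t)}
  have hdisj : Disjoint (dependenceWindow j n t) T := by
    simp only [Finset.disjoint_left, dependenceWindow, Finset.mem_product, Finset.mem_Icc, T,
      Finset.mem_insert, Finset.mem_singleton]
    rintro ⟨i, m⟩ ⟨-, hm, -⟩ (h | h) <;> simp only [Prod.mk.injEq] at h <;> omega
  have hp : ((a - 1, n - 1 - t) : ℤ × ℕ) ∈ T := by simp [T]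
  have hq : ((b, n - 1 - t) : ℤ × ℕ) ∈ T := by simp [T]
  have hfresh : {ω | V (a - 1, n - 1 - t) ω = ξ ∧ V (b, n - 1 - t) ω = η} =
      (fun ω (p : T) => V p ω) ⁻¹' {v | v ⟨_, hp⟩ = ξ ∧ v ⟨_, hq⟩ = η} := rfl
  have hindep := (hVindep.indepFun_finset _ T hdisj hVmeas).measure_inter_preimage_eq_mul
    ((fun ω (p : dependenceWindow j n t) => V p ω) '' survivalEvent V j n t a b)
    {v | v ⟨_, hp⟩ = ξ ∧ v ⟨_, hq⟩ = η} (Set.toFinite _).measurableSet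
    (Set.toFinite _).measurableSet
  rw [← survivalEvent_eq_preimage ht.le, ← hfresh] at hindep
  rw [hindep, measure_eq_and_eq_of_fair (hVmeas _) (hVmeas _)
    (hVindep.indepFun (by simp only [ne_eq, Prod.mk.injEq, not_and]; omega)) (hVunif _) (hVunif _)]

lemma measure_survivalEvent_succ (hVmeas : ∀ p, Measurable (V p)) (hVindep : iIndepFun V P)
    (hVunif : ∀ p, P {ω | V p ω = true} = 1 / 2) {t : ℕ} (ht : t < n) {a b : ℤ} (hab : a ≤ b) :
    4 * P (survivalEvent V j n (t + 1) a b) =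
      ∑ p : Bool × Bool, P (survivalEvent V j n t (a + lag p.1) (b + lag p.2)) := by
  have hlag : Function.Injective lag := by decide
  rw [survivalEvent_succ hab, measure_iUnion ?_ ?_, tsum_fintype, Finset.mul_sum]
  · refine Finset.sum_congr rfl fun p _ => ?_
    rw [measure_survivalEvent_inter_fresh hVmeas hVindep hVunif ht, mul_comm,
      mul_assoc, ENNReal.inv_mul_cancel (by norm_num) (by norm_num), mul_one]
  · intro p q hpq
    refine ((survivalEvent_disjoint ?_).mono Set.inter_subset_left Set.inter_subset_left)
    intro h
    simp only [Prod.mk.injEq, add_right_inj] at h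
    exact hpq (Prod.ext (hlag h.1) (hlag h.2))
  · exact fun p => (measurableSet_survivalEvent hVmeas ht.le _ _).inter
      (((hVmeas _) (measurableSet_singleton _)).inter ((hVmeas _) (measurableSet_singleton _)))

end Survival

section WidthMass

variable {Ω : Type*} [MeasurableSpace Ω] (P : Measure Ω) (V : ℤ × ℕ → Ω → Bool) (j : ℤ) (n : ℕ)

noncomputable def widthMass (t : ℕ) (k : ℤ) : ℝ≥0∞ :=
  ∑' a : ℤ, P (survivalEvent V j n t a (a + k))

variable {P V j n}

lemma widthMass_of_neg {t : ℕ} {k : ℤ} (hk : k < 0) : widthMass P V j n t k = 0 :=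
  ENNReal.tsum_eq_zero.2 fun _ => by rw [survivalEvent_eq_empty_of_lt (by omega), measure_empty]

lemma widthMass_zero_le [IsProbabilityMeasure P] (k : ℤ) : widthMass P V j n 0 k ≤ ballot 0 k := by
  have hempty : ∀ {a b : ℤ}, (a, b) ≠ (j, j) → survivalEvent V j n 0 a b = ∅ :=
    fun h => Set.eq_empty_of_forall_notMem fun _ ⟨_, hI⟩ => h hI.symm
  rw [widthMass, tsum_eq_single j fun a ha => by simp [hempty (a := a) (by simp [ha])]]
  rcases eq_or_ne k 0 with rfl | hk
  · simpa [ballot_zero_zero] using prob_le_one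
  · simp [hempty (a := j) (b := j + k) (by simpa using hk)]

lemma four_mul_widthMass_succ [IsProbabilityMeasure P] (hVmeas : ∀ p, Measurable (V p))
    (hVindep : iIndepFun V P) (hVunif : ∀ p, P {ω | V p ω = true} = 1 / 2) {t : ℕ} (ht : t < n)
    {k : ℤ} (hk : 0 ≤ k) :
    4 * widthMass P V j n (t + 1) k =
      widthMass P V j n t (k - 1) + 2 * widthMass P V j n t k + widthMass P V j n t (k + 1) := by
  have hshift (p : Bool × Bool) :
      ∑' a : ℤ, P (survivalEvent V j n t (a + lag p.1) (a + k + lag p.2)) =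
        widthMass P V j n t (k + lag p.2 - lag p.1) := by
    rw [widthMass, ← (Equiv.addRight (lag p.1)).tsum_eq
      fun a => P (survivalEvent V j n t a (a + (k + lag p.2 - lag p.1)))]
    refine tsum_congr fun a => ?_
    simp only [Equiv.coe_addRight]
    congr 2
    ring
  calc 4 * widthMass P V j n (t + 1) k
      = ∑' a : ℤ, ∑ p : Bool × Bool,
          P (survivalEvent V j n t (a + lag p.1) (a + k + lag p.2)) := by
        rw [widthMass, ← ENNReal.tsum_mul_left]
        exact tsum_congr fun a => measure_survivalEvent_succ hVmeas hVindep hVunif ht (by omega)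
    _ = ∑ p : Bool × Bool, widthMass P V j n t (k + lag p.2 - lag p.1) := by
        rw [Summable.tsum_finsetSum fun _ _ => ENNReal.summable]
        simp only [hshift]
    _ = _ := by
        simp only [Fintype.sum_prod_type, Fintype.sum_bool, lag, if_true, if_false,
          Bool.false_eq_true]
        ring_nf

lemma pow_four_mul_widthMass_le [IsProbabilityMeasure P] (hVmeas : ∀ p, Measurable (V p))
    (hVindep : iIndepFun V P) (hVunif : ∀ p, P {ω | V p ω = true} = 1 / 2) :
    ∀ {t : ℕ}, t ≤ n → ∀ {k : ℤ}, -1 ≤ k → 4 ^ t * widthMass P V j n t k ≤ ballot t k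
  | 0, _, k, _ => by simpa using widthMass_zero_le k
  | t + 1, ht, k, hk => by
    rcases hk.lt_or_eq with hk | rfl
    · have ih {k : ℤ} (hk : -1 ≤ k) := pow_four_mul_widthMass_le hVmeas hVindep hVunif
        (t := t) (by omega) hk
      calc 4 ^ (t + 1) * widthMass P V j n (t + 1) k
          = 4 ^ t * (4 * widthMass P V j n (t + 1) k) := by ring
        _ = 4 ^ t * widthMass P V j n t (k - 1) + 2 * (4 ^ t * widthMass P V j n t k) +
              4 ^ t * widthMass P V j n t (k + 1) := by
            rw [four_mul_widthMass_succ hVmeas hVindep hVunif (by omega) (by omega)]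
            ring
        _ ≤ ballot t (k - 1) + 2 * ballot t k + ballot t (k + 1) := by
            gcongr <;> exact ih (by omega)
        _ = ballot (t + 1) k := by
            rw [ballot_succ t (by omega)]
            push_cast
            ring
    · simp [widthMass_of_neg]

theorem measure_modelB_eq_true_le [IsProbabilityMeasure P] (hVmeas : ∀ p, Measurable (V p))
    (hVindep : iIndepFun V P) (hVunif : ∀ p, P {ω | V p ω = true} = 1 / 2)
    {Y : ℕ → Ω → ℤ → Bool} (hY : ∀ m ω, Y (m + 1) ω = modelB (Y m ω) (fun i => V (i, m) ω))
    (n : ℕ) (j : ℤ) :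
    P {ω | Y n ω j = true} ≤ ((2 * n + 1).choose n : ℝ≥0∞) / 4 ^ n := by
  calc P {ω | Y n ω j = true}
      ≤ ∑ k ∈ Finset.range (n + 1), widthMass P V j n n k :=
        (measure_mono fun ω hω =>
            mem_iUnion_survivalEvent (y := fun m => Y m ω) (fun m => hY m ω) hω).trans <|
          (measure_biUnion_finset_le _ _).trans <|
            Finset.sum_le_sum fun k _ => measure_iUnion_le _
    _ ≤ ∑ k ∈ Finset.range (n + 1), (ballot n k : ℝ≥0∞) / 4 ^ n := by
        refine Finset.sum_le_sum fun k _ => ?_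
        rw [ENNReal.le_div_iff_mul_le (by simp) (by simp), mul_comm]
        exact pow_four_mul_widthMass_le hVmeas hVindep hVunif le_rfl (by omega)
    _ = ((2 * n + 1).choose n : ℝ≥0∞) / 4 ^ n := by
        simp only [div_eq_mul_inv, ← Finset.sum_mul, ← Nat.cast_sum, sum_ballot]

end WidthMass

theorem modelA_modelB_upper_bound {Ω : Type*} [MeasurableSpace Ω] (P : Measure Ω)
    [IsProbabilityMeasure P]
    -- a realization of model B
    (V : ℤ × ℕ → Ω → Bool) (hVmeas : ∀ p, Measurable (V p))
    (hVindep : iIndepFun V P)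
    (hVunif : ∀ p, P {ω | V p ω = true} = 1 / 2)
    (Y : ℕ → Ω → ℤ → Bool)
    (hY : ∀ n ω, Y (n + 1) ω = modelB (Y n ω) (fun i => V (i, n) ω))
    -- a realization of model A
    (U : ℤ × ℕ → Ω → Bool) (hUmeas : ∀ p, Measurable (U p))
    (hUindep : iIndepFun U P)
    (hUunif : ∀ p, P {ω | U p ω = true} = 1 / 2)
    (A : ℕ → Ω → ℤ → Bool)
    (hA : ∀ n ω, A (n + 1) ω = modelA (A n ω) (fun i => U (i, n) ω))
    (n : ℕ) :
    P {ω | Y n ω 0 = true} ≤ (Nat.choose (2 * n + 1) n : ENNReal) / 4 ^ n ∧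
    P {ω | A n ω 0 = A n ω 1} ≤ (Nat.choose (2 * n + 1) n : ENNReal) / 4 ^ n := by
  refine ⟨measure_modelB_eq_true_le hVmeas hVindep hVunif hY n 0, ?_⟩
  have hequal : ∀ m ω, (fun i => A (m + 1) ω (i - 1) == A (m + 1) ω i) =
      modelB (fun i => A m ω (i - 1) == A m ω i) (fun i => U (i, m) ω) := fun m ω => by
    rw [modelB_beq_modelA, hA]
  simpa using measure_modelB_eq_true_le hUmeas hUindep hUunif
    (Y := fun m ω i => A m ω (i - 1) == A m ω i) hequal n 1
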